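/- arXiv:1910.09812 — 2 statements merged into one kernel-verified Lean document; each statement's English description precedes it below -/
import Mathlib

section
/- Let M ≥ 0 and let α = (in₁, cost₁, out₁) and β = (in₂, cost₂, out₂) be valid SoC-profile parameter triples with induced SoC profiles f_α and f_β, where we extend f_β by f_β(−∞) := −∞. (a) If out₁ ≥ in₂, then the SoC profile f of the linked triple (max(in₁, cost₁+in₂), max(cost₁+cost₂, in₁−out₂), min(out₂, out₁−cost₂)) satisfies f(b) = f_β(f_α(b)) for every b ∈ [0, M]. (b) If out₁ < in₂, then f_β(f_α(b)) = −∞ for every b ∈ [0, M]. -/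
/-!
Away from `−∞` a profile is the truncated translation `b ↦ min out (b - cost)` above its
threshold `inp`. Composing two of them gives `min out₂ (min out₁ (b - cost₁) - cost₂)` above the
threshold `max in₁ (cost₁ + in₂)`; the linked profile has the additional candidate
`b - (in₁ - out₂)` in its minimum, which is harmless because it is at least `out₂` once `in₁ ≤ b`.
-/

/-- An SoC-profile parameter triple `(inp, cost, out)` is valid for battery capacity `M`
if `0 ≤ inp ≤ M`, `0 ≤ out ≤ M`, and `cost ≤ inp`. -/
def ValidTriple (M inp cost out : ℝ) : Prop :=
  0 ≤ inp ∧ inp ≤ M ∧ 0 ≤ out ∧ out ≤ M ∧ cost ≤ inp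

/-- The SoC profile induced by the parameter triple `(inp, cost, out)`, extended to `EReal`
so that `⊥` (representing `−∞`) is mapped to `⊥`. -/
noncomputable def socProfile (inp cost out : ℝ) (b : EReal) : EReal :=
  if b < (inp : EReal) then ⊥
  else if (out : EReal) < b - (cost : EReal) then (out : EReal)
  else b - (cost : EReal)

section

variable {inp cost out x : ℝ}

lemma socProfile_bot (inp cost out : ℝ) : socProfile inp cost out ⊥ = ⊥ :=
  if_pos (EReal.bot_lt_coe inp)

lemma socProfile_coe_of_lt (h : x < inp) : socProfile inp cost out x = ⊥ :=
  if_pos (EReal.coe_lt_coe_iff.mpr h)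

lemma socProfile_coe_of_le (h : inp ≤ x) :
    socProfile inp cost out x = ((min out (x - cost) : ℝ) : EReal) := by
  rw [socProfile, if_neg (by exact_mod_cast h.not_gt), ← EReal.coe_sub]
  split_ifs with hout <;> rw [EReal.coe_lt_coe_iff] at hout
  · rw [min_eq_left hout.le]
  · rw [min_eq_right (not_lt.mp hout)]

end

section

variable {in₁ cost₁ out₁ in₂ cost₂ out₂ : ℝ}

lemma socProfile_comp_coe_eq_bot {x : ℝ} (h : x < in₁ ∨ x < cost₁ + in₂ ∨ out₁ < in₂) :
    socProfile in₂ cost₂ out₂ (socProfile in₁ cost₁ out₁ x) = ⊥ := by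
  rcases lt_or_ge x in₁ with hx | hx
  · rw [socProfile_coe_of_lt hx, socProfile_bot]
  · have hmid : min out₁ (x - cost₁) < in₂ := by
      rcases h with h | h | h
      exacts [absurd h hx.not_gt, min_lt_of_right_lt (by linarith), min_lt_of_left_lt h]
    rw [socProfile_coe_of_le hx, socProfile_coe_of_lt hmid]

lemma socProfile_link_coe (hlink : in₂ ≤ out₁) (x : ℝ) :
    socProfile (max in₁ (cost₁ + in₂)) (max (cost₁ + cost₂) (in₁ - out₂))
        (min out₂ (out₁ - cost₂)) x
      = socProfile in₂ cost₂ out₂ (socProfile in₁ cost₁ out₁ x) := by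
  rcases lt_or_ge x (max in₁ (cost₁ + in₂)) with hx | hx
  · rw [socProfile_coe_of_lt hx,
      socProfile_comp_coe_eq_bot (Or.imp_right Or.inl (lt_max_iff.mp hx))]
  obtain ⟨hx₁, hx₂⟩ := max_le_iff.mp hx
  have hmid : in₂ ≤ min out₁ (x - cost₁) := le_min hlink (by linarith)
  rw [socProfile_coe_of_le hx, socProfile_coe_of_le hx₁, socProfile_coe_of_le hmid,
    EReal.coe_eq_coe_iff, sub_sup, ← min_sub_sub_right, sub_sub]
  have hspare : out₂ ≤ x - (in₁ - out₂) := by linarith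
  grind

end

theorem socProfile_link_general (M in₁ cost₁ out₁ in₂ cost₂ out₂ : ℝ) :
    -- (a) if `out₁ ≥ in₂`, the profile of the linked triple is the composition
    (out₁ ≥ in₂ →
      ∀ b : ℝ, 0 ≤ b → b ≤ M →
        socProfile (max in₁ (cost₁ + in₂)) (max (cost₁ + cost₂) (in₁ - out₂))
            (min out₂ (out₁ - cost₂)) (b : EReal)
          = socProfile in₂ cost₂ out₂ (socProfile in₁ cost₁ out₁ (b : EReal))) ∧
    -- (b) if `out₁ < in₂`, the composition is identically `−∞`
    (out₁ < in₂ →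
      ∀ b : ℝ, 0 ≤ b → b ≤ M →
        socProfile in₂ cost₂ out₂ (socProfile in₁ cost₁ out₁ (b : EReal)) = ⊥) :=
  ⟨fun hlink b _ _ => socProfile_link_coe hlink b,
    fun hlt _ _ _ => socProfile_comp_coe_eq_bot (Or.inr (Or.inr hlt))⟩

theorem socProfile_link (M in₁ cost₁ out₁ in₂ cost₂ out₂ : ℝ) (hM : 0 ≤ M)
    (hα : ValidTriple M in₁ cost₁ out₁) (hβ : ValidTriple M in₂ cost₂ out₂) :
    -- (a) if `out₁ ≥ in₂`, the profile of the linked triple is the composition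
    (out₁ ≥ in₂ →
      ∀ b : ℝ, 0 ≤ b → b ≤ M →
        socProfile (max in₁ (cost₁ + in₂)) (max (cost₁ + cost₂) (in₁ - out₂))
            (min out₂ (out₁ - cost₂)) (b : EReal)
          = socProfile in₂ cost₂ out₂ (socProfile in₁ cost₁ out₁ (b : EReal))) ∧
    -- (b) if `out₁ < in₂`, the composition is identically `−∞`
    (out₁ < in₂ →
      ∀ b : ℝ, 0 ≤ b → b ≤ M →
        socProfile in₂ cost₂ out₂ (socProfile in₁ cost₁ out₁ (b : EReal)) = ⊥) :=
  socProfile_link_general M in₁ cost₁ out₁ in₂ cost₂ out₂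
end

section
/- Let M ≥ 0 and let α = (in₁, cost₁, out₁) and β = (in₂, cost₂, out₂) be valid SoC-profile parameter triples with out₁ ≥ in₂, and suppose the linked in-value satisfies max(in₁, cost₁+in₂) ≤ M. Then the linked triple (max(in₁, cost₁+in₂), max(cost₁+cost₂, in₁−out₂), min(out₂, out₁−cost₂)) is again valid; in particular max(cost₁+cost₂, in₁−out₂) ≤ max(in₁, cost₁+in₂) and 0 ≤ min(out₂, out₁−cost₂) ≤ M. -/
section LinkedTriple

variable {in₁ cost₁ out₁ in₂ cost₂ out₂ : ℝ}

theorem linked_cost_le_linked_in (hcost₂ : cost₂ ≤ in₂) (hout₂ : 0 ≤ out₂) :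
    max (cost₁ + cost₂) (in₁ - out₂) ≤ max in₁ (cost₁ + in₂) :=
  max_le (le_max_of_le_right (by linarith)) (le_max_of_le_left (by linarith))

theorem linked_out_nonneg (hout₂ : 0 ≤ out₂) (hcost₂ : cost₂ ≤ in₂) (hout : in₂ ≤ out₁) :
    0 ≤ min out₂ (out₁ - cost₂) :=
  le_min hout₂ (by linarith)

end LinkedTriple

theorem linked_triple_valid_general (M in₁ cost₁ out₁ in₂ cost₂ out₂ : ℝ)
    (hα : ValidTriple M in₁ cost₁ out₁) (hβ : ValidTriple M in₂ cost₂ out₂)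
    (hout : out₁ ≥ in₂) (hlin : max in₁ (cost₁ + in₂) ≤ M) :
    ValidTriple M (max in₁ (cost₁ + in₂)) (max (cost₁ + cost₂) (in₁ - out₂))
      (min out₂ (out₁ - cost₂)) ∧
    -- in particular:
    max (cost₁ + cost₂) (in₁ - out₂) ≤ max in₁ (cost₁ + in₂) ∧
    0 ≤ min out₂ (out₁ - cost₂) ∧ min out₂ (out₁ - cost₂) ≤ M := by
  obtain ⟨hin₁, -, -, -, -⟩ := hα
  obtain ⟨-, -, hout₂, hout₂M, hcost₂⟩ := hβ
  have hcost := linked_cost_le_linked_in (cost₁ := cost₁) (in₁ := in₁) hcost₂ hout₂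
  have hout_nonneg := linked_out_nonneg hout₂ hcost₂ hout
  have hout_le : min out₂ (out₁ - cost₂) ≤ M := (min_le_left _ _).trans hout₂M
  exact ⟨⟨le_max_of_le_left hin₁, hlin, hout_nonneg, hout_le, hcost⟩, hcost, hout_nonneg, hout_le⟩

theorem linked_triple_valid (M in₁ cost₁ out₁ in₂ cost₂ out₂ : ℝ) (hM : 0 ≤ M)
    (hα : ValidTriple M in₁ cost₁ out₁) (hβ : ValidTriple M in₂ cost₂ out₂)
    (hout : out₁ ≥ in₂) (hlin : max in₁ (cost₁ + in₂) ≤ M) :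
    ValidTriple M (max in₁ (cost₁ + in₂)) (max (cost₁ + cost₂) (in₁ - out₂))
      (min out₂ (out₁ - cost₂)) ∧
    -- in particular:
    max (cost₁ + cost₂) (in₁ - out₂) ≤ max in₁ (cost₁ + in₂) ∧
    0 ≤ min out₂ (out₁ - cost₂) ∧ min out₂ (out₁ - cost₂) ≤ M :=
  linked_triple_valid_general M in₁ cost₁ out₁ in₂ cost₂ out₂ hα hβ hout hlin
end
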